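/- Let K be a totally ordered division ring, let m, n ≥ 1, and let M be an m × n matrix with entries in K. Then there exist k ≥ 1 and a k × m matrix S with entries in K such that for every partially ordered right K-vector space E satisfying the interpolation property, the solution set {X ∈ M_{1,m}(E⁺) | XM ≥ 0} equals {YS | Y ∈ M_{1,k}(E⁺)}, where E⁺ = {x ∈ E | 0 ≤ x} and matrix inequalities are entrywise. -/

import Mathlib

/-!
Induction on the columns of `M`. If the nonnegative solutions of the first columns are exactly
the rows `Y S` with `Y ≥ 0`, the last column `v` adds the single condition `Y (S v) ≥ 0` on `Y`,
so everything reduces to one inequality `∑ xᵢ vᵢ ≥ 0`, i.e. `∑ xⱼ vⱼ⁻ ≤ ∑ xᵢ vᵢ⁺`.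
Interpolation yields the Riesz decomposition property, which splits this inequality into a
transport plan `y_{ji} ≥ 0` with `∑ᵢ y_{ji} = xⱼ vⱼ⁻` and `∑ⱼ y_{ji} ≤ xᵢ vᵢ⁺`. Then `x` is the
combination of the rows `eᵢ vᵢ⁻¹ + eⱼ (vⱼ⁻)⁻¹` (for `vᵢ > 0`) with coefficients `y_{ji}` and of
the unit rows `eₜ` (for `vₜ ≥ 0`) with the slack coefficients `xₜ - (∑ⱼ y_{jt}) vₜ⁻¹`.
-/

open Finset Matrix MulOpposite

universe u

def HasInterpolation (E : Type*) [Preorder E] : Prop :=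
  ∀ a₀ a₁ b₀ b₁ : E, a₀ ≤ b₀ → a₀ ≤ b₁ → a₁ ≤ b₀ → a₁ ≤ b₁ →
    ∃ x : E, a₀ ≤ x ∧ a₁ ≤ x ∧ x ≤ b₀ ∧ x ≤ b₁

namespace HasInterpolation

variable {E : Type*} [AddCommGroup E] [PartialOrder E] [IsOrderedAddMonoid E]
  (hE : HasInterpolation E)
include hE

theorem exists_eq_add_of_le_add {a b c : E} (ha : 0 ≤ a) (hb : 0 ≤ b) (hc : 0 ≤ c)
    (h : c ≤ a + b) : ∃ d₁ d₂, 0 ≤ d₁ ∧ d₁ ≤ a ∧ 0 ≤ d₂ ∧ d₂ ≤ b ∧ d₁ + d₂ = c := by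
  obtain ⟨d, hd₀, hcd, hdc, hda⟩ := hE 0 (c - b) c a hc ha (sub_le_self c hb)
    (sub_le_iff_le_add.2 h)
  exact ⟨d, c - d, hd₀, hda, sub_nonneg.2 hdc, sub_le_comm.1 hcd, add_sub_cancel d c⟩

theorem exists_eq_sum_of_le_sum {ι : Type*} [DecidableEq ι] (s : Finset ι) {a : ι → E} {c : E}
    (ha : ∀ i ∈ s, 0 ≤ a i) (hc : 0 ≤ c) (h : c ≤ ∑ i ∈ s, a i) :
    ∃ d : ι → E, (∀ i ∈ s, 0 ≤ d i ∧ d i ≤ a i) ∧ ∑ i ∈ s, d i = c := by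
  induction s using Finset.induction_on generalizing c with
  | empty => exact ⟨0, by simp, (le_antisymm (by simpa using h) hc).symm⟩
  | insert x s hx ih =>
    rw [forall_mem_insert] at ha
    rw [sum_insert hx] at h
    obtain ⟨e, e', he₀, hea, he'₀, he's, hee'⟩ :=
      hE.exists_eq_add_of_le_add ha.1 (sum_nonneg ha.2) hc h
    obtain ⟨d, hd, hdc⟩ := ih ha.2 he'₀ he's
    refine ⟨Function.update d x e, ?_, ?_⟩
    · rw [forall_mem_insert, Function.update_self]
      refine ⟨⟨he₀, hea⟩, fun i hi => ?_⟩
      rw [Function.update_of_ne (ne_of_mem_of_not_mem hi hx)]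
      exact hd i hi
    · rw [sum_insert hx, Function.update_self, sum_update_of_notMem hx, hdc, hee']

theorem exists_sum_eq_of_sum_le_sum {ι κ : Type*} [Fintype ι] [DecidableEq ι] [DecidableEq κ]
    (t : Finset κ) {a : ι → E} {c : κ → E} (ha : 0 ≤ a) (hc : ∀ j ∈ t, 0 ≤ c j)
    (h : ∑ j ∈ t, c j ≤ ∑ i, a i) :
    ∃ y : κ → ι → E, 0 ≤ y ∧ (∀ j ∈ t, ∑ i, y j i = c j) ∧ ∀ i, ∑ j ∈ t, y j i ≤ a i := by
  induction t using Finset.induction_on generalizing a with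
  | empty => exact ⟨0, le_rfl, by simp, fun i => by simpa using ha i⟩
  | insert j t hj ih =>
    rw [forall_mem_insert] at hc
    rw [sum_insert hj] at h
    obtain ⟨d, hd, hdc⟩ := hE.exists_eq_sum_of_le_sum univ (fun i _ => ha i) hc.1
      (le_trans (le_add_of_nonneg_right (sum_nonneg hc.2)) h)
    simp only [mem_univ, forall_const] at hd
    obtain ⟨y, hy₀, hyc, hya⟩ := ih (a := a - d) (fun i => sub_nonneg.2 (hd i).2) hc.2
      (by rwa [Pi.sub_def, sum_sub_distrib, hdc, le_sub_iff_add_le'])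
    refine ⟨Function.update y j d, ?_, ?_, fun i => ?_⟩
    · intro k
      rcases eq_or_ne k j with rfl | hk
      · rw [Function.update_self]
        exact fun i => (hd i).1
      · simpa [hk] using hy₀ k
    · rw [forall_mem_insert, Function.update_self]
      refine ⟨hdc, fun k hk => ?_⟩
      rw [Function.update_of_ne (ne_of_mem_of_not_mem hk hj)]
      exact hyc k hk
    · rw [sum_insert hj, Function.update_self]
      have hupd : ∑ k ∈ t, Function.update y j d k i = ∑ k ∈ t, y k i :=
        sum_congr rfl fun k hk => by rw [Function.update_of_ne (ne_of_mem_of_not_mem hk hj)]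
      rw [hupd, ← le_sub_iff_add_le']
      exact hya i

end HasInterpolation

section RowMul

variable {K E : Type*} [Semiring K] [AddCommMonoid E] [Module Kᵐᵒᵖ E] {ι κ γ δ : Type*}

/-- Right `K`-vector spaces are modelled as left `Kᵐᵒᵖ`-modules; `rowMul X M` is the product
`X M` of a row over `E` with a matrix over `K`. -/
def rowMul [Fintype ι] (X : ι → E) (M : Matrix ι κ K) : κ → E :=
  fun j => ∑ i, op (M i j) • X i

theorem rowMul_rowMul [Fintype ι] [Fintype γ] (Y : γ → E) (S : Matrix γ ι K)
    (M : Matrix ι κ K) : rowMul (rowMul Y S) M = rowMul Y (S * M) := by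
  ext j
  simp only [rowMul, mul_apply, smul_sum, smul_smul, ← op_mul, op_sum, sum_smul]
  exact sum_comm

theorem rowMul_one [Fintype ι] [DecidableEq ι] (X : ι → E) :
    rowMul X (1 : Matrix ι ι K) = X := by
  ext j
  simp [rowMul, one_apply, apply_ite op, ite_smul]

theorem rowMul_submatrix_equiv [Fintype γ] [Fintype δ] (Y : δ → E) (S : Matrix γ ι K)
    (e : δ ≃ γ) : rowMul Y (S.submatrix e id) = rowMul (Y ∘ e.symm) S := by
  ext j
  exact Fintype.sum_equiv e _ _ fun d => by simp

theorem rowMul_nonneg [PartialOrder K] [PartialOrder E] [IsOrderedAddMonoid E]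
    [PosSMulMono Kᵐᵒᵖ E] [Fintype γ] {Y : γ → E} {S : Matrix γ ι K} (hY : 0 ≤ Y)
    (hS : ∀ g i, 0 ≤ S g i) : 0 ≤ rowMul Y S :=
  fun j => sum_nonneg fun g _ => smul_nonneg (op_nonneg.2 (hS g j)) (hY g)

end RowMul

section Cones

variable {K : Type*} [Semiring K] (E : Type*) [AddCommMonoid E] [PartialOrder E]
  [Module Kᵐᵒᵖ E] {ι κ κ' γ δ : Type*}

def posSolutions [Fintype ι] (M : Matrix ι κ K) : Set (ι → E) := {X | 0 ≤ X ∧ 0 ≤ rowMul X M}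

def posCone [Fintype γ] (S : Matrix γ ι K) : Set (ι → E) := {X | ∃ Y, 0 ≤ Y ∧ X = rowMul Y S}

variable {E}

theorem posSolutions_inter_eq_posCone_mul [Fintype ι] [Fintype γ] [Fintype δ] {A : Matrix ι κ K}
    {B : Matrix ι κ' K} {S : Matrix γ ι K} {T : Matrix δ γ K}
    (hS : posSolutions E A = posCone E S) (hT : posSolutions E (S * B) = posCone E T) :
    posSolutions E A ∩ posSolutions E B = posCone E (T * S) := by
  ext X
  constructor
  · rintro ⟨hXA, -, hXB⟩
    rw [hS] at hXA
    obtain ⟨Y, hY, rfl⟩ := hXA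
    have hYsol : Y ∈ posSolutions E (S * B) := ⟨hY, by rwa [← rowMul_rowMul]⟩
    rw [hT] at hYsol
    obtain ⟨Z, hZ, rfl⟩ := hYsol
    exact ⟨Z, hZ, rowMul_rowMul Z T S⟩
  · rintro ⟨Z, hZ, rfl⟩
    have hY : rowMul Z T ∈ posSolutions E (S * B) := hT ▸ ⟨Z, hZ, rfl⟩
    have hX : rowMul (rowMul Z T) S ∈ posSolutions E A := hS ▸ ⟨_, hY.1, rfl⟩
    rw [← rowMul_rowMul]
    exact ⟨hX, hX.1, by rw [rowMul_rowMul]; exact hY.2⟩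

theorem posSolutions_eq_inter_succ [Fintype ι] {n : ℕ} (M : Matrix ι (Fin (n + 1)) K) :
    posSolutions E M =
      posSolutions E (M.submatrix id Fin.succ) ∩ posSolutions E (replicateCol Unit (M · 0)) := by
  ext X
  simp only [posSolutions, rowMul, Set.mem_inter_iff, Set.mem_ofPred_eq, Pi.le_def,
    Fin.forall_fin_succ, submatrix_apply, replicateCol_apply, id, Pi.zero_apply, forall_const]
  tauto

theorem posSolutions_of_isEmpty [Fintype ι] [IsEmpty κ] (M : Matrix ι κ K) :
    posSolutions E M = {X | 0 ≤ X} := by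
  ext X
  simp [posSolutions, Pi.le_def]

theorem posCone_one [Fintype ι] [DecidableEq ι] : posCone E (1 : Matrix ι ι K) = {X | 0 ≤ X} := by
  ext X
  simp [posCone, rowMul_one]

theorem posCone_submatrix_equiv [Fintype γ] [Fintype δ] (S : Matrix γ ι K) (e : δ ≃ γ) :
    posCone E (S.submatrix e id) = posCone E S := by
  ext X
  simp only [posCone, rowMul_submatrix_equiv, Set.mem_ofPred_eq]
  constructor
  · rintro ⟨Y, hY, rfl⟩
    exact ⟨Y ∘ e.symm, fun g => hY _, rfl⟩
  · rintro ⟨Y, hY, rfl⟩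
    exact ⟨Y ∘ e, fun d => hY _, by simp [Function.comp_def]⟩

theorem posCone_subset_posSolutions [PartialOrder K] [IsOrderedAddMonoid E] [PosSMulMono Kᵐᵒᵖ E]
    [Fintype ι] [Fintype γ] {S : Matrix γ ι K} {M : Matrix ι κ K}
    (hS : ∀ g i, 0 ≤ S g i) (hSM : ∀ g j, 0 ≤ (S * M) g j) :
    posCone E S ⊆ posSolutions E M := by
  rintro _ ⟨Y, hY, rfl⟩
  exact ⟨rowMul_nonneg hY hS, by rw [rowMul_rowMul]; exact rowMul_nonneg hY hSM⟩

end Cones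

section Universal

variable {K : Type*} [Semiring K] [PartialOrder K] {ι κ γ δ : Type*} [Fintype ι] [Fintype γ]

def IsUniversalGenerator (M : Matrix ι κ K) (S : Matrix γ ι K) : Prop :=
  ∀ (E : Type u) [AddCommGroup E] [PartialOrder E] [IsOrderedAddMonoid E] [Module Kᵐᵒᵖ E]
    [PosSMulMono Kᵐᵒᵖ E], HasInterpolation E → posSolutions E M = posCone E S

theorem IsUniversalGenerator.submatrix_equiv [Fintype δ] {M : Matrix ι κ K} {S : Matrix γ ι K}
    (hS : IsUniversalGenerator.{u} M S) (e : δ ≃ γ) :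
    IsUniversalGenerator.{u} M (S.submatrix e id) :=
  fun E _ _ _ _ _ hE => (hS E hE).trans (posCone_submatrix_equiv S e).symm

theorem IsUniversalGenerator.exists_fin [Nonempty γ] {M : Matrix ι κ K} {S : Matrix γ ι K}
    (hS : IsUniversalGenerator.{u} M S) :
    ∃ k, 0 < k ∧ ∃ S' : Matrix (Fin k) ι K, IsUniversalGenerator.{u} M S' :=
  ⟨_, Fintype.card_pos, _, hS.submatrix_equiv (Fintype.equivFin γ).symm⟩

theorem isUniversalGenerator_one [DecidableEq ι] [IsEmpty κ] (M : Matrix ι κ K) :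
    IsUniversalGenerator.{u} M (1 : Matrix ι ι K) :=
  fun _ _ _ _ _ _ _ => (posSolutions_of_isEmpty M).trans posCone_one.symm

theorem IsUniversalGenerator.succ [Fintype δ] {n : ℕ} {M : Matrix ι (Fin (n + 1)) K}
    {S : Matrix γ ι K} {T : Matrix δ γ K}
    (hS : IsUniversalGenerator.{u} (M.submatrix id Fin.succ) S)
    (hT : IsUniversalGenerator.{u} (replicateCol Unit (S *ᵥ (M · 0))) T) :
    IsUniversalGenerator.{u} M (T * S) := fun E _ _ _ _ _ hE => by
  rw [posSolutions_eq_inter_succ]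
  exact posSolutions_inter_eq_posCone_mul (hS E hE) (hT E hE)

end Universal

section Halfspace

variable {K : Type*} [DivisionRing K] [LinearOrder K] {ι : Type*} [DecidableEq ι]

/-- For `v j ≥ 0` the row indexed by `(i, j)` is just `eᵢ (v i)⁻¹`, since `0⁻¹ = 0`. -/
def halfspaceGenerators (v : ι → K) : Matrix (ι ⊕ ι × ι) ι K
  | .inl s => if 0 ≤ v s then Pi.single s 1 else 0
  | .inr (i, j) => if 0 < v i then Pi.single i (v i)⁻¹ + Pi.single j ((v j)⁻)⁻¹ else 0

theorem rowMul_halfspaceGenerators_apply [Fintype ι] {E : Type*} [AddCommGroup E] [Module Kᵐᵒᵖ E]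
    (v : ι → K) (W : ι → E) {y : ι → ι → E} (hy : ∀ i, v i ≤ 0 → ∀ j, y j i = 0) (t : ι) :
    rowMul (Sum.elim W fun p => y p.2 p.1) (halfspaceGenerators v) t =
      (if 0 ≤ v t then W t else 0) + (op (v t)⁻¹ • ∑ j, y j t + op ((v t)⁻)⁻¹ • ∑ i, y t i) := by
  have sum_single_smul (a : ι → K) (f : ι → E) :
      ∑ i, op ((Pi.single i (a i) : ι → K) t) • f i = op (a t) • f t := by
    simp [Pi.single_apply, apply_ite op, ite_smul]
  have hunit : ∑ s, op ((if 0 ≤ v s then Pi.single s 1 else 0 : ι → K) t) • W s =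
      if 0 ≤ v t then W t else 0 := by
    rw [sum_eq_single t (fun s _ hst => by simp [ite_apply, hst.symm]) (by simp)]
    split_ifs <;> simp
  have hpair (i j : ι) : op ((if 0 < v i then Pi.single i (v i)⁻¹ + Pi.single j ((v j)⁻)⁻¹
      else 0 : ι → K) t) • y j i = op ((Pi.single i (v i)⁻¹ : ι → K) t) • y j i +
        op ((Pi.single j ((v j)⁻)⁻¹ : ι → K) t) • y j i := by
    split_ifs with hi
    · rw [Pi.add_apply, op_add, add_smul]
    · simp [hy i (not_lt.1 hi) j]
  simp only [rowMul, Fintype.sum_sum_type, Fintype.sum_prod_type, halfspaceGenerators,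
    Sum.elim_inl, Sum.elim_inr, hunit, hpair, sum_add_distrib]
  rw [sum_comm (f := fun i j => op ((Pi.single j ((v j)⁻)⁻¹ : ι → K) t) • y j i)]
  simp only [← smul_sum, sum_single_smul]

variable [IsOrderedRing K]

theorem halfspaceGenerators_nonneg (v : ι → K) (g : ι ⊕ ι × ι) (t : ι) :
    0 ≤ halfspaceGenerators v g t := by
  have single_nonneg (i : ι) {a : K} (ha : 0 ≤ a) : 0 ≤ (Pi.single i a : ι → K) t := by
    rw [Pi.single_apply]
    split_ifs
    exacts [ha, le_rfl]
  rcases g with s | ⟨i, j⟩ <;> simp only [halfspaceGenerators] <;> split_ifs with h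
  · exact single_nonneg s zero_le_one
  · exact le_rfl
  · exact add_nonneg (single_nonneg i (inv_nonneg.2 h.le))
      (single_nonneg j (inv_nonneg.2 (negPart_nonneg _)))
  · exact le_rfl

theorem halfspaceGenerators_mul_nonneg [Fintype ι] (v : ι → K) (g : ι ⊕ ι × ι) (u : Unit) :
    0 ≤ (halfspaceGenerators v * replicateCol Unit v) g u := by
  change 0 ≤ halfspaceGenerators v g ⬝ᵥ v
  rcases g with s | ⟨i, j⟩ <;> simp only [halfspaceGenerators] <;> split_ifs with h
  · simpa using h
  · simp
  · rw [add_dotProduct, single_dotProduct, single_dotProduct, inv_mul_cancel₀ h.ne']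
    rcases le_or_gt 0 (v j) with hj | hj
    · simp [negPart_eq_zero.2 hj]
    · rw [negPart_eq_neg.2 hj.le, inv_neg, neg_mul, inv_mul_cancel₀ hj.ne, add_neg_cancel]
  · simp

theorem HasInterpolation.posSolutions_subset_posCone_halfspaceGenerators [Fintype ι]
    {E : Type*}
    [AddCommGroup E] [PartialOrder E] [IsOrderedAddMonoid E] [Module Kᵐᵒᵖ E]
    [PosSMulMono Kᵐᵒᵖ E] (hE : HasInterpolation E) (v : ι → K) :
    posSolutions E (replicateCol Unit v) ⊆ posCone E (halfspaceGenerators v) := by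
  rintro X ⟨hX, hXv⟩
  have hdot : ∑ j, op (v j)⁻ • X j ≤ ∑ i, op (v i)⁺ • X i := by
    rw [← sub_nonneg, ← sum_sub_distrib]
    simpa only [← sub_smul, ← op_sub, posPart_sub_negPart, rowMul, replicateCol_apply,
      Pi.zero_apply] using hXv ()
  obtain ⟨y, hy, hyc, hya⟩ := hE.exists_sum_eq_of_sum_le_sum univ
    (fun i => smul_nonneg (op_nonneg.2 (posPart_nonneg (v i))) (hX i))
    (fun j _ => smul_nonneg (op_nonneg.2 (negPart_nonneg (v j))) (hX j)) hdot
  simp only [mem_univ, forall_const] at hyc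
  have hy_zero (i : ι) (hi : v i ≤ 0) (j : ι) : y j i = 0 := by
    have hsum : ∑ j, y j i = 0 :=
      le_antisymm (by simpa [posPart_eq_zero.2 hi] using hya i) (sum_nonneg fun j _ => hy j i)
    exact (sum_eq_zero_iff_of_nonneg fun j _ => hy j i).1 hsum j (mem_univ j)
  refine ⟨Sum.elim (fun t => X t - op (v t)⁻¹ • ∑ j, y j t) (fun p => y p.2 p.1), ?_, ?_⟩
  · rintro (t | p)
    · rcases lt_or_ge 0 (v t) with ht | ht
      · simp only [Sum.elim_inl, Pi.zero_apply, sub_nonneg]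
        calc op (v t)⁻¹ • ∑ j, y j t ≤ op (v t)⁻¹ • op (v t)⁺ • X t :=
              smul_le_smul_of_nonneg_left (hya t) (op_nonneg.2 (inv_nonneg.2 ht.le))
          _ = X t := by
            rw [posPart_eq_self.2 ht.le, smul_smul, ← op_mul, mul_inv_cancel₀ ht.ne', op_one,
              one_smul]
      · simpa [sum_eq_zero fun j _ => hy_zero t ht j] using hX t
    · exact hy _ _
  · ext t
    rw [rowMul_halfspaceGenerators_apply v _ hy_zero, hyc]
    rcases le_or_gt 0 (v t) with ht | ht
    · rw [if_pos ht, negPart_eq_zero.2 ht, _root_.inv_zero, op_zero, zero_smul, add_zero,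
        sub_add_cancel]
    · rw [if_neg ht.not_ge, sum_eq_zero fun j _ => hy_zero t ht.le j, smul_zero, zero_add,
        zero_add, smul_smul, ← op_mul, negPart_eq_neg.2 ht.le,
        mul_inv_cancel₀ (neg_ne_zero.2 ht.ne), op_one, one_smul]

theorem isUniversalGenerator_halfspaceGenerators [Fintype ι] (v : ι → K) :
    IsUniversalGenerator.{u} (replicateCol Unit v) (halfspaceGenerators v) :=
  fun _ _ _ _ _ _ hE => (hE.posSolutions_subset_posCone_halfspaceGenerators v).antisymm
    (posCone_subset_posSolutions (halfspaceGenerators_nonneg v) (halfspaceGenerators_mul_nonneg v))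

theorem exists_isUniversalGenerator [Fintype ι] [Nonempty ι] {n : ℕ} (M : Matrix ι (Fin n) K) :
    ∃ k, 0 < k ∧ ∃ S : Matrix (Fin k) ι K, IsUniversalGenerator.{u} M S := by
  induction n with
  | zero => exact (isUniversalGenerator_one M).exists_fin
  | succ n ih =>
    obtain ⟨k, hk, S, hS⟩ := ih (M.submatrix id Fin.succ)
    have : Nonempty (Fin k) := ⟨⟨0, hk⟩⟩
    exact (hS.succ (isUniversalGenerator_halfspaceGenerators _)).exists_fin

end Halfspace

abbrev moduleOpOfRightAction {K E : Type*} [Semiring K] [AddCommGroup E] (sm : E → K → E)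
    (add_sm : ∀ (a b : E) (r : K), sm (a + b) r = sm a r + sm b r)
    (sm_add : ∀ (a : E) (r s : K), sm a (r + s) = sm a r + sm a s)
    (sm_mul : ∀ (a : E) (r s : K), sm a (r * s) = sm (sm a r) s)
    (sm_one : ∀ a : E, sm a 1 = a) : Module Kᵐᵒᵖ E where
  smul r a := sm a r.unop
  one_smul := sm_one
  mul_smul r s a := sm_mul a s.unop r.unop
  smul_zero r := show sm 0 r.unop = 0 by simpa using add_sm 0 0 r.unop
  smul_add r a b := add_sm a b r.unop
  add_smul r s a := sm_add a r.unop s.unop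
  zero_smul a := show sm a 0 = 0 by simpa using sm_add a 0 0

theorem exists_universal_generators_divisionRing_general
    (K : Type*) [DivisionRing K] [LinearOrder K]
    (haddK : ∀ a b : K, a ≤ b → ∀ c : K, a + c ≤ b + c)
    (hmulK : ∀ a b : K, 0 ≤ a → 0 ≤ b → 0 ≤ a * b)
    (m n : ℕ) (hm : 1 ≤ m) (M : Matrix (Fin m) (Fin n) K) :
    ∃ (k : ℕ), 1 ≤ k ∧ ∃ S : Matrix (Fin k) (Fin m) K,
      ∀ (E : Type*) [AddCommGroup E] [PartialOrder E] (sm : E → K → E),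
        (∀ (a b : E) (r : K), sm (a + b) r = sm a r + sm b r) →
        (∀ (a : E) (r s : K), sm a (r + s) = sm a r + sm a s) →
        (∀ (a : E) (r s : K), sm a (r * s) = sm (sm a r) s) →
        (∀ a : E, sm a 1 = a) →
        (∀ a b : E, a ≤ b → ∀ c : E, a + c ≤ b + c) →
        (∀ (a : E) (r : K), 0 ≤ a → 0 ≤ r → 0 ≤ sm a r) →
        (∀ a₀ a₁ b₀ b₁ : E, a₀ ≤ b₀ → a₀ ≤ b₁ → a₁ ≤ b₀ → a₁ ≤ b₁ →
          ∃ x : E, a₀ ≤ x ∧ a₁ ≤ x ∧ x ≤ b₀ ∧ x ≤ b₁) →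
        {X : Fin m → E | (∀ i, 0 ≤ X i) ∧ ∀ j, 0 ≤ ∑ i, sm (X i) (M i j)}
          = {X : Fin m → E | ∃ Y : Fin k → E, (∀ i, 0 ≤ Y i) ∧
              X = fun j => ∑ i, sm (Y i) (S i j)} := by
  have : IsOrderedAddMonoid K := { add_le_add_left := haddK }
  have : ZeroLEOneClass K := ⟨(le_total 0 1).elim id fun h => by
    simpa using hmulK _ _ (neg_nonneg.2 h) (neg_nonneg.2 h)⟩
  have : IsOrderedRing K := .of_mul_nonneg hmulK
  have : Nonempty (Fin m) := ⟨⟨0, hm⟩⟩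
  obtain ⟨k, hk, S, hS⟩ := exists_isUniversalGenerator M
  refine ⟨k, hk, S,
    fun E _ _ sm add_sm sm_add sm_mul sm_one add_le_add_right smul_nonneg hE => ?_⟩
  let : Module Kᵐᵒᵖ E := moduleOpOfRightAction sm add_sm sm_add sm_mul sm_one
  have : IsOrderedAddMonoid E := { add_le_add_left := add_le_add_right }
  have : PosSMulMono Kᵐᵒᵖ E := .of_smul_nonneg fun r hr a ha => smul_nonneg a r.unop ha hr
  exact hS E hE

/-- analogue of the Effros–Handelman–Shen argument for totally ordered
division rings.  Let `K` be a totally ordered division ring, `m, n ≥ 1`, and `M` an `m × n`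
matrix with entries in `K`.  Then there exist `k ≥ 1` and a `k × m` matrix `S` over `K` such
that, for every partially ordered right `K`-vector space `E` (given by a right action
`sm : E → K → E` satisfying the right-module axioms, with translation-invariant addition and
`0 ≤ a`, `0 ≤ ξ` implying `0 ≤ aξ`) satisfying the interpolation property, the solution set
`{X ∈ M_{1,m}(E⁺) | XM ≥ 0}` equals `{YS | Y ∈ M_{1,k}(E⁺)}` (matrix inequalities are
entrywise). -/
theorem exists_universal_generators_divisionRing
    (K : Type*) [DivisionRing K] [LinearOrder K]
    (haddK : ∀ a b : K, a ≤ b → ∀ c : K, a + c ≤ b + c)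
    (hmulK : ∀ a b : K, 0 ≤ a → 0 ≤ b → 0 ≤ a * b)
    (m n : ℕ) (hm : 1 ≤ m) (hn : 1 ≤ n) (M : Matrix (Fin m) (Fin n) K) :
    ∃ (k : ℕ), 1 ≤ k ∧ ∃ S : Matrix (Fin k) (Fin m) K,
      ∀ (E : Type*) [AddCommGroup E] [PartialOrder E] (sm : E → K → E),
        (∀ (a b : E) (r : K), sm (a + b) r = sm a r + sm b r) →
        (∀ (a : E) (r s : K), sm a (r + s) = sm a r + sm a s) →
        (∀ (a : E) (r s : K), sm a (r * s) = sm (sm a r) s) →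
        (∀ a : E, sm a 1 = a) →
        (∀ a b : E, a ≤ b → ∀ c : E, a + c ≤ b + c) →
        (∀ (a : E) (r : K), 0 ≤ a → 0 ≤ r → 0 ≤ sm a r) →
        (∀ a₀ a₁ b₀ b₁ : E, a₀ ≤ b₀ → a₀ ≤ b₁ → a₁ ≤ b₀ → a₁ ≤ b₁ →
          ∃ x : E, a₀ ≤ x ∧ a₁ ≤ x ∧ x ≤ b₀ ∧ x ≤ b₁) →
        {X : Fin m → E | (∀ i, 0 ≤ X i) ∧ ∀ j, 0 ≤ ∑ i, sm (X i) (M i j)}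
          = {X : Fin m → E | ∃ Y : Fin k → E, (∀ i, 0 ≤ Y i) ∧
              X = fun j => ∑ i, sm (Y i) (S i j)} :=
  exists_universal_generators_divisionRing_general K haddK hmulK m n hm M
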